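/- For every 1 ≤ n ≤ N−1 and all λ, μ ∈ ℂ, the Yangian-type operators at the same level commute among themselves: ℬ_n(λ) ℬ_n(μ) = ℬ_n(μ) ℬ_n(λ) and 𝒞_n(λ) 𝒞_n(μ) = 𝒞_n(μ) 𝒞_n(λ), as identities of operators applied to any function f : ℂ^Γ → ℂ at every point γ with γ_{kj} − γ_{ks} ∉ iℏ·ℤ for all k and all j ≠ s. -/
import Mathlib


noncomputable section

open Finset

/-- A point of the Gelfand–Zetlin variable space: an assignment of a complex
number to each index pair `(n, j)` (with `γ (N, j)` playing the role of the
fixed top-level parameters). -/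
abbrev Pt : Type := ℕ × ℕ → ℂ

/-- Operators acting on functions of the Gelfand–Zetlin variables. -/
abbrev Op : Type := (Pt → ℂ) → (Pt → ℂ)

/-- Shift the coordinate `γ (n, j)` by `c`. -/
def shift (n j : ℕ) (c : ℂ) (γ : Pt) : Pt :=
  fun p => if p = (n, j) then γ p + c else γ p

/-- The diagonal Gelfand–Zetlin operator `E_{nn}`. -/
def Ediag (hb : ℂ) (n : ℕ) : Op := fun f γ =>
  (1 / (Complex.I * hb)) *
    ((∑ j ∈ Finset.Icc 1 n, γ (n, j)) - ∑ j ∈ Finset.Icc 1 (n - 1), γ (n - 1, j)) * f γ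

/-- The raising Gelfand–Zetlin operator `E_{n,n+1}`. -/
def Eraise (hb : ℂ) (n : ℕ) : Op := fun f γ =>
  -(1 / (Complex.I * hb)) * ∑ j ∈ Finset.Icc 1 n,
    ((∏ r ∈ Finset.Icc 1 (n + 1), (γ (n, j) - γ (n + 1, r) - Complex.I * hb / 2)) /
        ∏ s ∈ (Finset.Icc 1 n).erase j, (γ (n, j) - γ (n, s))) *
      f (shift n j (-(Complex.I * hb)) γ)

/-- The lowering Gelfand–Zetlin operator `E_{n+1,n}`. -/
def Elower (hb : ℂ) (n : ℕ) : Op := fun f γ =>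
  (1 / (Complex.I * hb)) * ∑ j ∈ Finset.Icc 1 n,
    ((∏ r ∈ Finset.Icc 1 (n - 1), (γ (n, j) - γ (n - 1, r) + Complex.I * hb / 2)) /
        ∏ s ∈ (Finset.Icc 1 n).erase j, (γ (n, j) - γ (n, s))) *
      f (shift n j (Complex.I * hb) γ)

/-- Genericity: `γ (m, j) - γ (m, s) ∉ ihb·ℤ` for all levels `m ≤ N` and all `j ≠ s`. -/
def Generic (N : ℕ) (hb : ℂ) (γ : Pt) : Prop :=
  ∀ m j s, 1 ≤ m → m ≤ N → 1 ≤ j → j ≤ m → 1 ≤ s → s ≤ m → j ≠ s →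
    ∀ k : ℤ, γ (m, j) - γ (m, s) ≠ Complex.I * hb * (k : ℂ)

/-- The operator `𝒜_n(λ)`: multiplication by `∏_{j=1}^n (λ − γ_{nj})`. -/
def Aop (l : ℂ) (n : ℕ) : Op := fun f γ =>
  (∏ j ∈ Finset.Icc 1 n, (l - γ (n, j))) * f γ

/-- The operator `ℬ_n(λ)`. -/
def Bop (hb l : ℂ) (n : ℕ) : Op := fun f γ =>
  ∑ j ∈ Finset.Icc 1 n,
    (∏ s ∈ (Finset.Icc 1 n).erase j, ((l - γ (n, s)) / (γ (n, j) - γ (n, s)))) *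
      (∏ r ∈ Finset.Icc 1 (n + 1), (γ (n, j) - γ (n + 1, r) - Complex.I * hb / 2)) *
      f (shift n j (-(Complex.I * hb)) γ)

/-- The operator `𝒞_n(λ)`. -/
def Cop (hb l : ℂ) (n : ℕ) : Op := fun f γ =>
  -∑ j ∈ Finset.Icc 1 n,
    (∏ s ∈ (Finset.Icc 1 n).erase j, ((l - γ (n, s)) / (γ (n, j) - γ (n, s)))) *
      (∏ r ∈ Finset.Icc 1 (n - 1), (γ (n, j) - γ (n - 1, r) + Complex.I * hb / 2)) *
      f (shift n j (Complex.I * hb) γ)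

private lemma shift_ne' (n j : ℕ) (c : ℂ) (γ : Pt) {p : ℕ × ℕ} (hp : p ≠ (n, j)) :
    shift n j c γ p = γ p := if_neg hp

private lemma shift_eq' (n j : ℕ) (c : ℂ) (γ : Pt) : shift n j c γ (n, j) = γ (n, j) + c :=
  if_pos rfl

private lemma shift_comm' (n j k : ℕ) (c : ℂ) (γ : Pt) :
    shift n k c (shift n j c γ) = shift n j c (shift n k c γ) := by
  rcases eq_or_ne j k with rfl | hjk
  · rfl
  have hne1 : ((n, j) : ℕ × ℕ) ≠ (n, k) := by simp [Prod.ext_iff, hjk]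
  have hne2 : ((n, k) : ℕ × ℕ) ≠ (n, j) := by simp [Prod.ext_iff, Ne.symm hjk]
  funext p
  simp only [shift]
  by_cases h1 : p = (n, j)
  · subst h1; simp [hne1, hne2]
  by_cases h2 : p = (n, k)
  · subst h2; simp [hne1, hne2]
  simp [h1, h2]

/-- Generic coefficient of a Yangian-type level-`n` operator. -/
private def cg (n : ℕ) (P : ℂ → ℂ) (l : ℂ) (j : ℕ) (δ : Pt) : ℂ :=
  (∏ s ∈ (Finset.Icc 1 n).erase j, ((l - δ (n, s)) / (δ (n, j) - δ (n, s)))) * P (δ (n, j))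

/-- Generic Yangian-type level-`n` operator with shift `h` and polynomial part `P`. -/
private def Tg (n : ℕ) (h : ℂ) (P : ℂ → ℂ) (l : ℂ) (g : Pt → ℂ) (δ : Pt) : ℂ :=
  ∑ j ∈ Finset.Icc 1 n, cg n P l j δ * g (shift n j h δ)

private lemma cg_pull (n : ℕ) (P : ℂ → ℂ) (l : ℂ) {j k : ℕ} (δ : Pt)
    (hk : k ∈ (Finset.Icc 1 n).erase j) :
    cg n P l j δ = ((l - δ (n, k)) / (δ (n, j) - δ (n, k))) *
      ((∏ s ∈ ((Finset.Icc 1 n).erase j).erase k, ((l - δ (n, s)) / (δ (n, j) - δ (n, s)))) *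
        P (δ (n, j))) := by
  rw [cg, ← Finset.mul_prod_erase _ _ hk, mul_assoc]

private lemma Tg_comm (n : ℕ) (h : ℂ) (P : ℂ → ℂ) (f : Pt → ℂ) (γ : Pt) (l μ : ℂ)
    (hne : ∀ j ∈ Finset.Icc 1 n, ∀ k ∈ Finset.Icc 1 n, j ≠ k →
      γ (n, j) - γ (n, k) ≠ 0 ∧ γ (n, j) - γ (n, k) ≠ h) :
    Tg n h P l (Tg n h P μ f) γ = Tg n h P μ (Tg n h P l f) γ := by
  have key : ∀ j ∈ Finset.Icc 1 n, ∀ k ∈ Finset.Icc 1 n,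
      cg n P l j γ * cg n P μ k (shift n j h γ) + cg n P l k γ * cg n P μ j (shift n k h γ)
    = cg n P μ j γ * cg n P l k (shift n j h γ) + cg n P μ k γ * cg n P l j (shift n k h γ) := by
    intro j hj k hk
    by_cases hjk : j = k
    · subst hjk
      have hsh : ∀ s ∈ (Finset.Icc 1 n).erase j, shift n j h γ (n, s) = γ (n, s) := by
        intro s hs
        exact shift_ne' _ _ _ _ (by simp [Prod.ext_iff, Finset.ne_of_mem_erase hs])
      have prodrw : ∀ x : ℂ, cg n P x j (shift n j h γ) =
          (∏ s ∈ (Finset.Icc 1 n).erase j, ((x - γ (n, s)) / (γ (n, j) + h - γ (n, s)))) *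
            P (γ (n, j) + h) := by
        intro x
        rw [cg, shift_eq']
        exact congrArg (· * _) (Finset.prod_congr rfl fun s hs => by rw [hsh s hs])
      rw [prodrw, prodrw, cg, cg]
      have e0 : (∏ s ∈ (Finset.Icc 1 n).erase j, ((l - γ (n, s)) / (γ (n, j) - γ (n, s)))) *
            ∏ s ∈ (Finset.Icc 1 n).erase j, ((μ - γ (n, s)) / (γ (n, j) + h - γ (n, s)))
          = (∏ s ∈ (Finset.Icc 1 n).erase j, ((μ - γ (n, s)) / (γ (n, j) - γ (n, s)))) *
            ∏ s ∈ (Finset.Icc 1 n).erase j, ((l - γ (n, s)) / (γ (n, j) + h - γ (n, s))) := by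
        rw [← Finset.prod_mul_distrib, ← Finset.prod_mul_distrib]
        exact Finset.prod_congr rfl fun s hs => by ring
      linear_combination 2 * P (γ (n, j)) * P (γ (n, j) + h) * e0
    · have hab := (hne j hj k hk hjk).1
      have habh := (hne j hj k hk hjk).2
      have hba := (hne k hk j hj (Ne.symm hjk)).1
      have hbah := (hne k hk j hj (Ne.symm hjk)).2
      have hkj : k ∈ (Finset.Icc 1 n).erase j := Finset.mem_erase.mpr ⟨Ne.symm hjk, hk⟩
      have hjk' : j ∈ (Finset.Icc 1 n).erase k := Finset.mem_erase.mpr ⟨hjk, hj⟩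
      have hEE : ((Finset.Icc 1 n).erase k).erase j = ((Finset.Icc 1 n).erase j).erase k :=
        Finset.erase_right_comm
      set a := γ (n, j) with ha
      set b := γ (n, k) with hbdef
      set E := ((Finset.Icc 1 n).erase j).erase k with hE
      have sjE : ∀ s ∈ E, shift n j h γ (n, s) = γ (n, s) := by
        intro s hs
        have hsj : s ≠ j := Finset.ne_of_mem_erase (Finset.mem_of_mem_erase hs)
        exact shift_ne' _ _ _ _ (by simp [Prod.ext_iff, hsj])
      have skE : ∀ s ∈ E, shift n k h γ (n, s) = γ (n, s) := by
        intro s hs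
        have hsk : s ≠ k := Finset.ne_of_mem_erase hs
        exact shift_ne' _ _ _ _ (by simp [Prod.ext_iff, hsk])
      have hkj2 : ((n, k) : ℕ × ℕ) ≠ (n, j) := by simp [Prod.ext_iff, Ne.symm hjk]
      have hjk2 : ((n, j) : ℕ × ℕ) ≠ (n, k) := by simp [Prod.ext_iff, hjk]
      have c1 : ∀ x : ℂ, cg n P x j γ = ((x - b) / (a - b)) *
          ((∏ s ∈ E, ((x - γ (n, s)) / (a - γ (n, s)))) * P a) := fun x => cg_pull n P x γ hkj
      have c2 : ∀ x : ℂ, cg n P x k γ = ((x - a) / (b - a)) *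
          ((∏ s ∈ E, ((x - γ (n, s)) / (b - γ (n, s)))) * P b) := by
        intro x; rw [cg_pull n P x γ hjk', hEE]
      have c3 : ∀ x : ℂ, cg n P x k (shift n j h γ) = ((x - (a + h)) / (b - (a + h))) *
          ((∏ s ∈ E, ((x - γ (n, s)) / (b - γ (n, s)))) * P b) := by
        intro x
        rw [cg_pull n P x (shift n j h γ) hjk', hEE, shift_eq', shift_ne' n j h γ hkj2]
        congr 2
        exact Finset.prod_congr rfl fun s hs => by rw [sjE s hs]
      have c4 : ∀ x : ℂ, cg n P x j (shift n k h γ) = ((x - (b + h)) / (a - (b + h))) *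
          ((∏ s ∈ E, ((x - γ (n, s)) / (a - γ (n, s)))) * P a) := by
        intro x
        rw [cg_pull n P x (shift n k h γ) hkj, shift_eq', shift_ne' n k h γ hjk2]
        congr 2
        exact Finset.prod_congr rfl fun s hs => by rw [skE s hs]
      have e0 : (∏ s ∈ E, ((l - γ (n, s)) / (a - γ (n, s)))) *
            ∏ s ∈ E, ((μ - γ (n, s)) / (b - γ (n, s)))
          = (∏ s ∈ E, ((l - γ (n, s)) / (b - γ (n, s)))) *
            ∏ s ∈ E, ((μ - γ (n, s)) / (a - γ (n, s))) := by
        rw [← Finset.prod_mul_distrib, ← Finset.prod_mul_distrib]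
        exact Finset.prod_congr rfl fun s hs => by ring
      have hba0 : b - (a + h) ≠ 0 := fun hc => hbah (by linear_combination hc)
      have hab0 : a - (b + h) ≠ 0 := fun hc => habh (by linear_combination hc)
      have gsym : (l - b) / (a - b) * ((μ - (a + h)) / (b - (a + h)))
            + (l - a) / (b - a) * ((μ - (b + h)) / (a - (b + h)))
          = (μ - b) / (a - b) * ((l - (a + h)) / (b - (a + h)))
            + (μ - a) / (b - a) * ((l - (b + h)) / (a - (b + h))) := by
        field_simp
        ring
      rw [c1 l, c1 μ, c2 l, c2 μ, c3 l, c3 μ, c4 l, c4 μ]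
      linear_combination
        ((∏ s ∈ E, ((l - γ (n, s)) / (a - γ (n, s)))) *
          (∏ s ∈ E, ((μ - γ (n, s)) / (b - γ (n, s)))) * (P a * P b)) * gsym
        + (((μ - b) / (a - b) * ((l - (a + h)) / (b - (a + h)))
            - (l - a) / (b - a) * ((μ - (b + h)) / (a - (b + h)))) * (P a * P b)) * e0
  have swap : ∀ x y : ℂ,
      (∑ j ∈ Finset.Icc 1 n, ∑ k ∈ Finset.Icc 1 n,
        cg n P x j γ * (cg n P y k (shift n j h γ) * f (shift n k h (shift n j h γ))))
    = ∑ j ∈ Finset.Icc 1 n, ∑ k ∈ Finset.Icc 1 n,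
        cg n P x k γ * (cg n P y j (shift n k h γ) * f (shift n k h (shift n j h γ))) := by
    intro x y
    rw [Finset.sum_comm]
    refine Finset.sum_congr rfl fun j hj => Finset.sum_congr rfl fun k hk => ?_
    rw [shift_comm' n k j h γ]
  have main : ∀ x y : ℂ,
      2 * (∑ j ∈ Finset.Icc 1 n, ∑ k ∈ Finset.Icc 1 n,
        cg n P x j γ * (cg n P y k (shift n j h γ) * f (shift n k h (shift n j h γ))))
    = ∑ j ∈ Finset.Icc 1 n, ∑ k ∈ Finset.Icc 1 n,
        (cg n P x k γ * cg n P y j (shift n k h γ) + cg n P x j γ * cg n P y k (shift n j h γ)) *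
          f (shift n k h (shift n j h γ)) := by
    intro x y
    rw [two_mul]
    nth_rewrite 1 [swap x y]
    rw [← Finset.sum_add_distrib]
    refine Finset.sum_congr rfl fun j hj => ?_
    rw [← Finset.sum_add_distrib]
    refine Finset.sum_congr rfl fun k hk => ?_
    ring
  have expand : ∀ x y : ℂ, Tg n h P x (Tg n h P y f) γ =
      ∑ j ∈ Finset.Icc 1 n, ∑ k ∈ Finset.Icc 1 n,
        cg n P x j γ * (cg n P y k (shift n j h γ) * f (shift n k h (shift n j h γ))) := by
    intro x y
    simp only [Tg, Finset.mul_sum]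
  apply mul_left_cancel₀ (two_ne_zero (α := ℂ))
  rw [expand l μ, expand μ l, main l μ, main μ l]
  exact Finset.sum_congr rfl fun j hj => Finset.sum_congr rfl fun k hk =>
    congrArg (· * f (shift n k h (shift n j h γ))) (key k hk j hj)

private lemma Tg_congr (n : ℕ) (h : ℂ) (P : ℂ → ℂ) (x : ℂ) (g1 g2 : Pt → ℂ) (γ : Pt)
    (hg : ∀ j ∈ Finset.Icc 1 n, g1 (shift n j h γ) = g2 (shift n j h γ)) :
    Tg n h P x g1 γ = Tg n h P x g2 γ :=
  Finset.sum_congr rfl fun j hj => by rw [hg j hj]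

private lemma Tg_neg (n : ℕ) (h : ℂ) (P : ℂ → ℂ) (x : ℂ) (g : Pt → ℂ) (γ : Pt) :
    Tg n h P x (fun δ => -g δ) γ = -Tg n h P x g γ := by
  simp [Tg, mul_neg, Finset.sum_neg_distrib]

private lemma Bop_eq (hb : ℂ) (n : ℕ) (x : ℂ) (g : Pt → ℂ) (γ δ : Pt)
    (hδ : ∀ r, δ (n + 1, r) = γ (n + 1, r)) :
    Bop hb x n g δ = Tg n (-(Complex.I * hb))
      (fun z => ∏ r ∈ Finset.Icc 1 (n + 1), (z - γ (n + 1, r) - Complex.I * hb / 2)) x g δ := by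
  unfold Bop Tg cg
  refine Finset.sum_congr rfl fun j hj => ?_
  congr 2
  exact Finset.prod_congr rfl fun r hr => by rw [hδ r]

private lemma Cop_eq (hb : ℂ) (n : ℕ) (x : ℂ) (g : Pt → ℂ) (γ δ : Pt)
    (hδ : ∀ r, δ (n - 1, r) = γ (n - 1, r)) :
    Cop hb x n g δ = -Tg n (Complex.I * hb)
      (fun z => ∏ r ∈ Finset.Icc 1 (n - 1), (z - γ (n - 1, r) + Complex.I * hb / 2)) x g δ := by
  unfold Cop Tg cg
  congr 1
  refine Finset.sum_congr rfl fun j hj => ?_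
  congr 2
  exact Finset.prod_congr rfl fun r hr => by rw [hδ r]

/-- the operators `ℬ_n(λ)` commute among themselves, and likewise
the operators `𝒞_n(λ)`, pointwise at generic points. -/
theorem yangian_BB_CC_commute (N : ℕ) (hN : 2 ≤ N) (hb : ℂ) (hhb : hb ≠ 0)
    (n : ℕ) (hn1 : 1 ≤ n) (hn2 : n ≤ N - 1) (l μ : ℂ)
    (f : Pt → ℂ) (γ : Pt) (hγ : Generic N hb γ) :
    Bop hb l n (Bop hb μ n f) γ = Bop hb μ n (Bop hb l n f) γ ∧
    Cop hb l n (Cop hb μ n f) γ = Cop hb μ n (Cop hb l n f) γ := by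
  have hnN : n ≤ N := le_trans hn2 (Nat.sub_le N 1)
  have hne0 : ∀ j ∈ Finset.Icc 1 n, ∀ k ∈ Finset.Icc 1 n, j ≠ k →
      γ (n, j) - γ (n, k) ≠ 0 := by
    intro j hj k hk hjk
    rw [Finset.mem_Icc] at hj hk
    simpa using hγ n j k hn1 hnN hj.1 hj.2 hk.1 hk.2 hjk 0
  have hneB : ∀ j ∈ Finset.Icc 1 n, ∀ k ∈ Finset.Icc 1 n, j ≠ k →
      γ (n, j) - γ (n, k) ≠ 0 ∧ γ (n, j) - γ (n, k) ≠ -(Complex.I * hb) := by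
    intro j hj k hk hjk
    refine ⟨hne0 j hj k hk hjk, ?_⟩
    rw [Finset.mem_Icc] at hj hk
    simpa using hγ n j k hn1 hnN hj.1 hj.2 hk.1 hk.2 hjk (-1)
  have hneC : ∀ j ∈ Finset.Icc 1 n, ∀ k ∈ Finset.Icc 1 n, j ≠ k →
      γ (n, j) - γ (n, k) ≠ 0 ∧ γ (n, j) - γ (n, k) ≠ Complex.I * hb := by
    intro j hj k hk hjk
    refine ⟨hne0 j hj k hk hjk, ?_⟩
    rw [Finset.mem_Icc] at hj hk
    simpa using hγ n j k hn1 hnN hj.1 hj.2 hk.1 hk.2 hjk 1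
  constructor
  · -- B B commute
    have levelB : ∀ j r, shift n j (-(Complex.I * hb)) γ (n + 1, r) = γ (n + 1, r) := by
      intro j r
      refine shift_ne' _ _ _ _ ?_
      intro hc
      have := congrArg Prod.fst hc
      simp at this
    have stepB : ∀ x y : ℂ, Bop hb x n (Bop hb y n f) γ =
        Tg n (-(Complex.I * hb))
          (fun z => ∏ r ∈ Finset.Icc 1 (n + 1), (z - γ (n + 1, r) - Complex.I * hb / 2))
          x (Tg n (-(Complex.I * hb))
            (fun z => ∏ r ∈ Finset.Icc 1 (n + 1), (z - γ (n + 1, r) - Complex.I * hb / 2)) y f) γ := by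
      intro x y
      rw [Bop_eq hb n x _ γ γ (fun r => rfl)]
      exact Tg_congr _ _ _ _ _ _ _ (fun j hj => Bop_eq hb n y f γ _ (fun r => levelB j r))
    rw [stepB l μ, stepB μ l]
    exact Tg_comm n _ _ f γ l μ hneB
  · -- C C commute
    have levelC : ∀ j r, shift n j (Complex.I * hb) γ (n - 1, r) = γ (n - 1, r) := by
      intro j r
      refine shift_ne' _ _ _ _ ?_
      intro hc
      have := congrArg Prod.fst hc
      simp at this
      omega
    have stepC : ∀ x y : ℂ, Cop hb x n (Cop hb y n f) γ =
        Tg n (Complex.I * hb)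
          (fun z => ∏ r ∈ Finset.Icc 1 (n - 1), (z - γ (n - 1, r) + Complex.I * hb / 2))
          x (Tg n (Complex.I * hb)
            (fun z => ∏ r ∈ Finset.Icc 1 (n - 1), (z - γ (n - 1, r) + Complex.I * hb / 2)) y f) γ := by
      intro x y
      rw [Cop_eq hb n x _ γ γ (fun r => rfl)]
      have h1 : Tg n (Complex.I * hb)
          (fun z => ∏ r ∈ Finset.Icc 1 (n - 1), (z - γ (n - 1, r) + Complex.I * hb / 2))
          x (Cop hb y n f) γ =
        Tg n (Complex.I * hb)
          (fun z => ∏ r ∈ Finset.Icc 1 (n - 1), (z - γ (n - 1, r) + Complex.I * hb / 2))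
          x (fun δ => -Tg n (Complex.I * hb)
            (fun z => ∏ r ∈ Finset.Icc 1 (n - 1), (z - γ (n - 1, r) + Complex.I * hb / 2)) y f δ) γ :=
        Tg_congr _ _ _ _ _ _ _ (fun j hj => Cop_eq hb n y f γ _ (fun r => levelC j r))
      rw [h1, Tg_neg, neg_neg]
    rw [stepC l μ, stepC μ l]
    exact Tg_comm n _ _ f γ l μ hneC
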